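/- arXiv:1905.05158 — 12 statements merged into one kernel-verified Lean document; each statement's English description precedes it below -/
import Mathlib

section
/- Characterization of incentive systems without Sybil costs (Lemma 5.2): Let U be a real-valued function of pairs (α, s), where α > 0 is a node's own resource power and s is a finite multiset of positive reals (the other nodes' resource powers). Suppose U satisfies: (GR) U(α, s) > 0 for every α > 0 and every finite multiset s of positive reals; (ND) for every finite multiset s of positive reals and every nonempty finite multiset t of positive reals, the sum over the elements x of t (counted with multiplicity) of U(x, s + (t with one copy of x removed)) is at least U(sum of t, s); and (NS, zero Sybil cost) the same sum is at most U(sum of t, s). Then there exists a function F from the positive reals to the positive reals such that U(α, s) = F(α + sum of s) · α for every α > 0 and every finite multiset s of positive reals. Conversely, any U of this form satisfies (GR), (ND) and (NS). -/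
/-!
Together, ND and NS say that splitting a node into several nodes leaves the total utility
unchanged. Splitting `a + b` into `a` and `b`, and comparing the two splittings of `a + s.sum`
into `a ::ₘ s` and `{a, s.sum}`, shows that `U a s` depends on `s` only through `T = a + s.sum`,
and that for fixed `T` it is additive in `a ∈ (0, T]`. Being positive, it is monotone, hence
linear: `U a s = U T 0 / T * a`.
-/

open Set

def IsAddOnIoc (h : ℝ → ℝ) (T : ℝ) : Prop :=
  ∀ a b, 0 < a → 0 < b → a + b ≤ T → h (a + b) = h a + h b

namespace IsAddOnIoc

variable {h : ℝ → ℝ} {T : ℝ}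

lemma nat_mul (hadd : IsAddOnIoc h T) {a : ℝ} (ha : 0 < a) {n : ℕ} (hn : 0 < n)
    (hnT : n * a ≤ T) : h (n * a) = n * h a := by
  induction n, hn using Nat.le_induction with
  | base => simp
  | succ n hn ih =>
    have hn' : (0 : ℝ) < n := by exact_mod_cast hn
    push_cast at hnT ⊢
    rw [add_mul, one_mul] at hnT ⊢
    rw [hadd _ _ (by positivity) ha hnT, ih (by linarith)]
    ring

lemma monotoneOn (hadd : IsAddOnIoc h T) (hnonneg : ∀ a ∈ Ioc 0 T, 0 ≤ h a) :
    MonotoneOn h (Ioc 0 T) := by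
  intro a ha b hb hab
  rcases hab.eq_or_lt with rfl | hlt
  · rfl
  have := hadd a (b - a) ha.1 (by linarith) (by linarith [hb.2])
  rw [add_sub_cancel] at this
  linarith [hnonneg (b - a) ⟨by linarith, by linarith [ha.1, hb.2]⟩]

lemma nat_mul_le (hadd : IsAddOnIoc h T) (hnonneg : ∀ a ∈ Ioc 0 T, 0 ≤ h a) {a : ℝ}
    (ha : a ∈ Ioc 0 T) {k n : ℕ} (hn : 0 < n) (hkn : k * T ≤ n * a) :
    k * h T ≤ n * h a := by
  rcases Nat.eq_zero_or_pos k with rfl | hk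
  · simpa using mul_nonneg (Nat.cast_nonneg n) (hnonneg a ha)
  have hn' : (0 : ℝ) < n := by exact_mod_cast hn
  have hT : 0 < T := ha.1.trans_le ha.2
  obtain ⟨u, hu0, rfl⟩ : ∃ u, 0 < u ∧ T = n * u := ⟨T / n, by positivity, by field_simp⟩
  have hku : k * u ≤ a := by nlinarith
  have hmono := hadd.monotoneOn hnonneg ⟨by positivity, hku.trans ha.2⟩ ha hku
  rw [hadd.nat_mul hu0 hk (hku.trans ha.2)] at hmono
  rw [hadd.nat_mul hu0 hn le_rfl]
  nlinarith

lemma div_mul_le (hadd : IsAddOnIoc h T) (hnonneg : ∀ a ∈ Ioc 0 T, 0 ≤ h a) {a : ℝ}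
    (ha : a ∈ Ioc 0 T) : a / T * h T ≤ h a := by
  have hT : 0 < T := ha.1.trans_le ha.2
  rcases (hnonneg T ⟨hT, le_rfl⟩).eq_or_lt with h0 | hpos
  · simpa [← h0] using hnonneg a ha
  rw [← le_div_iff₀ hpos]
  refine le_of_forall_rat_lt_imp_le fun q hq => ?_
  rcases le_or_gt q 0 with hq0 | hq0
  · exact (Rat.cast_nonpos.2 hq0).trans (by have := hnonneg a ha; positivity)
  have hnum : (q.num.toNat : ℝ) = q.num := by
    exact_mod_cast Int.toNat_of_nonneg (Rat.num_pos.2 hq0).le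
  have hden : (0 : ℝ) < q.den := by exact_mod_cast q.den_pos
  rw [Rat.cast_def, ← hnum] at hq ⊢
  rw [lt_div_iff₀ hT, div_mul_eq_mul_div, div_lt_iff₀ hden] at hq
  rw [div_le_div_iff₀ hden hpos]
  have := hadd.nat_mul_le hnonneg ha q.den_pos (k := q.num.toNat) (by linarith)
  linarith

lemma eq_div_mul (hadd : IsAddOnIoc h T) (hnonneg : ∀ a ∈ Ioc 0 T, 0 ≤ h a) {a : ℝ}
    (ha : a ∈ Ioc 0 T) : h a = a / T * h T := by
  have hT : 0 < T := ha.1.trans_le ha.2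
  rcases ha.2.eq_or_lt with rfl | hlt
  · rw [div_self hT.ne', one_mul]
  have hc : T - a ∈ Ioc 0 T := ⟨by linarith, by linarith [ha.1]⟩
  have hsplit := hadd a (T - a) ha.1 hc.1 (by linarith)
  rw [add_sub_cancel] at hsplit
  -- the lower bound at `T - a` is an upper bound at `a`
  have hlow := hadd.div_mul_le hnonneg hc
  refine le_antisymm ?_ (hadd.div_mul_le hnonneg ha)
  rw [sub_div, div_self hT.ne'] at hlow
  linarith

end IsAddOnIoc

lemma Multiset.sum_pos_of_ne_zero {s : Multiset ℝ} (hs0 : s ≠ 0) (hs : ∀ x ∈ s, 0 < x) :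
    0 < s.sum := by
  obtain ⟨x, hx⟩ := Multiset.exists_mem_of_ne_zero hs0
  rw [← Multiset.sum_erase hx]
  exact add_pos_of_pos_of_nonneg (hs x hx)
    (Multiset.sum_nonneg fun y hy => (hs y (Multiset.mem_of_mem_erase hy)).le)

lemma exists_multiset_pos_sum_eq {c : ℝ} (hc : 0 ≤ c) :
    ∃ s : Multiset ℝ, (∀ x ∈ s, 0 < x) ∧ s.sum = c := by
  rcases hc.eq_or_lt with rfl | hc
  · exact ⟨0, by simp, by simp⟩
  · exact ⟨{c}, by simpa using hc, by simp⟩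

def SplitInvariant (U : ℝ → Multiset ℝ → ℝ) : Prop :=
  ∀ s : Multiset ℝ, (∀ x ∈ s, (0:ℝ) < x) →
    ∀ t : Multiset ℝ, t ≠ 0 → (∀ x ∈ t, (0:ℝ) < x) →
      (t.map (fun x => U x (s + t.erase x))).sum = U t.sum s

/-- `U a s` for any `s` with `a + s.sum = T`, by `SplitInvariant.eq_atTotal`. -/
noncomputable def atTotal (U : ℝ → Multiset ℝ → ℝ) (T a : ℝ) : ℝ :=
  if a = T then U T 0 else U a {T - a}

namespace SplitInvariant

variable {U : ℝ → Multiset ℝ → ℝ} {s : Multiset ℝ} {a b T : ℝ}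

lemma add (hU : SplitInvariant U) (hs : ∀ x ∈ s, 0 < x) (ha : 0 < a) (hb : 0 < b) :
    U (a + b) s = U a (b ::ₘ s) + U b (a ::ₘ s) := by
  have h := hU s hs {a, b} (by simp) (by simp [ha, hb])
  simpa [Multiset.erase_cons_tail_of_mem (Multiset.mem_singleton_self b), Multiset.singleton_add,
    add_comm s] using h.symm

lemma eq_singleton_sum (hU : SplitInvariant U) (hs0 : s ≠ 0) (hs : ∀ x ∈ s, 0 < x)
    (ha : 0 < a) : U a s = U a {s.sum} := by
  -- split `a + s.sum` into `a ::ₘ s` and into `{a, s.sum}`, then split `s.sum` back into `s`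
  have hsplit := hU 0 (by simp) (a ::ₘ s) (by simp) (Multiset.forall_mem_cons.2 ⟨ha, hs⟩)
  have hrest := hU {a} (by simpa using ha) s hs0 hs
  have hpair := hU.add (s := 0) (by simp) ha (Multiset.sum_pos_of_ne_zero hs0 hs)
  simp only [Multiset.map_cons, Multiset.sum_cons, Multiset.erase_cons_head, zero_add] at hsplit
  rw [Multiset.map_congr rfl fun y hy => by
    rw [Multiset.erase_cons_tail_of_mem hy, ← Multiset.singleton_add]] at hsplit
  simp only [Multiset.cons_zero] at hpair
  linarith

lemma eq_atTotal (hU : SplitInvariant U) (hs : ∀ x ∈ s, 0 < x) (ha : 0 < a)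
    (hT : a + s.sum = T) : U a s = atTotal U T a := by
  subst hT
  rcases eq_or_ne s 0 with rfl | hs0
  · simp [atTotal]
  · have hσ := Multiset.sum_pos_of_ne_zero hs0 hs
    rw [atTotal, if_neg (by linarith), add_sub_cancel_left, hU.eq_singleton_sum hs0 hs ha]

lemma isAddOnIoc_atTotal (hU : SplitInvariant U) : IsAddOnIoc (atTotal U T) T := by
  intro a b ha hb hab
  obtain ⟨s, hs, hsum⟩ := exists_multiset_pos_sum_eq (sub_nonneg.2 hab)
  rw [← hU.eq_atTotal hs (add_pos ha hb) (by linarith), hU.add hs ha hb,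
    hU.eq_atTotal (T := T) (Multiset.forall_mem_cons.2 ⟨hb, hs⟩) ha (by simp; linarith),
    hU.eq_atTotal (T := T) (Multiset.forall_mem_cons.2 ⟨ha, hs⟩) hb (by simp; linarith)]

lemma atTotal_pos (hU : SplitInvariant U)
    (hGR : ∀ α : ℝ, 0 < α → ∀ s : Multiset ℝ, (∀ x ∈ s, 0 < x) → 0 < U α s)
    (ha : a ∈ Ioc 0 T) : 0 < atTotal U T a := by
  obtain ⟨s, hs, hsum⟩ := exists_multiset_pos_sum_eq (sub_nonneg.2 ha.2)
  rw [← hU.eq_atTotal hs ha.1 (by linarith)]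
  exact hGR a ha.1 s hs

lemma eq_mul (hU : SplitInvariant U)
    (hGR : ∀ α : ℝ, 0 < α → ∀ s : Multiset ℝ, (∀ x ∈ s, 0 < x) → 0 < U α s)
    (hs : ∀ x ∈ s, 0 < x) (ha : 0 < a) : U a s = U (a + s.sum) 0 / (a + s.sum) * a := by
  have hT : a ∈ Ioc 0 (a + s.sum) :=
    ⟨ha, le_add_of_nonneg_right (Multiset.sum_nonneg fun x hx => (hs x hx).le)⟩
  rw [hU.eq_atTotal hs ha rfl,
    hU.isAddOnIoc_atTotal.eq_div_mul (fun x hx => (hU.atTotal_pos hGR hx).le) hT]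
  simp only [atTotal, if_pos]
  ring

end SplitInvariant

lemma splitInvariant_of_eq_mul {U : ℝ → Multiset ℝ → ℝ} {F : ℝ → ℝ}
    (hF : ∀ α : ℝ, 0 < α → ∀ s : Multiset ℝ, (∀ x ∈ s, 0 < x) →
      U α s = F (α + s.sum) * α) :
    SplitInvariant U := by
  intro s hs t ht0 ht
  have hsum : ∀ x ∈ t, U x (s + t.erase x) = F (t.sum + s.sum) * x := by
    intro x hx
    rw [hF x (ht x hx) _ (fun y hy => (Multiset.mem_add.1 hy).elim (hs y)
      (fun hy => ht y (Multiset.mem_of_mem_erase hy)))]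
    rw [Multiset.sum_add, ← Multiset.sum_erase hx]
    ring_nf
  rw [Multiset.map_congr rfl hsum, Multiset.sum_map_mul_left, Multiset.map_id',
    hF _ (Multiset.sum_pos_of_ne_zero ht0 ht) s hs]

/-- Characterization of incentive systems without Sybil costs (Lemma 5.2):
`U α s` is the utility of a node with resource power `α` when the other nodes'
resource powers form the multiset `s`.  GR ∧ ND ∧ NS hold iff `U` is of the
linear form `U α s = F (α + s.sum) * α` for some positive-valued `F`. -/
theorem stmt_0 (U : ℝ → Multiset ℝ → ℝ) :
    ((∀ α : ℝ, 0 < α → ∀ s : Multiset ℝ, (∀ x ∈ s, (0:ℝ) < x) → 0 < U α s) ∧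
     (∀ s : Multiset ℝ, (∀ x ∈ s, (0:ℝ) < x) →
       ∀ t : Multiset ℝ, t ≠ 0 → (∀ x ∈ t, (0:ℝ) < x) →
         U t.sum s ≤ (t.map (fun x => U x (s + t.erase x))).sum) ∧
     (∀ s : Multiset ℝ, (∀ x ∈ s, (0:ℝ) < x) →
       ∀ t : Multiset ℝ, t ≠ 0 → (∀ x ∈ t, (0:ℝ) < x) →
         (t.map (fun x => U x (s + t.erase x))).sum ≤ U t.sum s)) ↔
    (∃ F : ℝ → ℝ, (∀ x : ℝ, 0 < x → 0 < F x) ∧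
      ∀ α : ℝ, 0 < α → ∀ s : Multiset ℝ, (∀ x ∈ s, (0:ℝ) < x) →
        U α s = F (α + s.sum) * α) := by
  constructor
  · rintro ⟨hGR, hND, hNS⟩
    have hU : SplitInvariant U := fun s hs t ht0 ht =>
      le_antisymm (hNS s hs t ht0 ht) (hND s hs t ht0 ht)
    exact ⟨fun c => U c 0 / c, fun c hc => div_pos (hGR c hc 0 (by simp)) hc,
      fun α hα s hs => hU.eq_mul hGR hs hα⟩
  · rintro ⟨F, hFpos, hF⟩
    have hU := splitInvariant_of_eq_mul hF
    refine ⟨fun α hα s hs => ?_, fun s hs t ht0 ht => (hU s hs t ht0 ht).ge,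
      fun s hs t ht0 ht => (hU s hs t ht0 ht).le⟩
    rw [hF α hα s hs]
    exact mul_pos (hFpos _ (add_pos_of_pos_of_nonneg hα
      (Multiset.sum_nonneg fun x hx => (hs x hx).le))) hα
end

section
/- Per-node utility bounds (generalizing Eqs. (M) and (1) in the proof of Theorem 4.3): Let M ≥ 1 and let α_1, …, α_M > 0 and u_1, …, u_M ≥ 0 be reals such that for all i, j: (monotonicity) α_i ≤ α_j implies u_i ≤ u_j, and (nonincreasing reward rate) α_i ≤ α_j implies u_i·α_j ≥ u_j·α_i. Then for every i: (min_k α_k / Σ_k α_k) · Σ_k u_k ≤ u_i ≤ (max_k α_k / Σ_k α_k) · Σ_k u_k. -/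
/-- Per-node utility bounds: if utilities are monotone in resource power and
the reward rate `u i / α i` is nonincreasing in `α i`, then every utility lies
between `(min α / Σ α) · Σ u` and `(max α / Σ α) · Σ u`. -/
theorem stmt_1 (M : ℕ) (hM : 1 ≤ M) (α u : Fin M → ℝ)
    (hα : ∀ i, 0 < α i) (hu : ∀ i, 0 ≤ u i)
    (hmono : ∀ i j, α i ≤ α j → u i ≤ u j)
    (hrate : ∀ i j, α i ≤ α j → u j * α i ≤ u i * α j) :
    ∀ i,
      (Finset.univ.inf' ⟨⟨0, hM⟩, Finset.mem_univ _⟩ α / ∑ k, α k) * ∑ k, u k ≤ u i ∧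
      u i ≤ (Finset.univ.sup' ⟨⟨0, hM⟩, Finset.mem_univ _⟩ α / ∑ k, α k) * ∑ k, u k := by
  intro i
  have hS : 0 < ∑ k, α k :=
    Finset.sum_pos (fun k _ => hα k) ⟨⟨0, hM⟩, Finset.mem_univ _⟩
  set m := Finset.univ.inf' ⟨⟨0, hM⟩, Finset.mem_univ _⟩ α with hm
  set Mx := Finset.univ.sup' ⟨⟨0, hM⟩, Finset.mem_univ _⟩ α with hMx
  constructor
  · rw [div_mul_eq_mul_div, div_le_iff₀ hS]
    rw [Finset.mul_sum, Finset.mul_sum]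
    refine Finset.sum_le_sum fun k _ => ?_
    rcases le_total (α k) (α i) with h | h
    · calc m * u k ≤ α k * u k := by
            exact mul_le_mul_of_nonneg_right (Finset.inf'_le _ (Finset.mem_univ k)) (hu k)
        _ ≤ u i * α k := by
            rw [mul_comm]; exact mul_le_mul_of_nonneg_right (hmono k i h) (hα k).le
    · calc m * u k ≤ α i * u k := by
            exact mul_le_mul_of_nonneg_right (Finset.inf'_le _ (Finset.mem_univ i)) (hu k)
        _ = u k * α i := mul_comm _ _
        _ ≤ u i * α k := hrate i k h
  · rw [div_mul_eq_mul_div, le_div_iff₀ hS]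
    rw [Finset.mul_sum, Finset.mul_sum]
    refine Finset.sum_le_sum fun k _ => ?_
    rcases le_total (α k) (α i) with h | h
    · calc u i * α k ≤ u k * α i := hrate k i h
        _ ≤ u k * Mx := mul_le_mul_of_nonneg_left (Finset.le_sup' _ (Finset.mem_univ i)) (hu k)
        _ = Mx * u k := mul_comm _ _
    · calc u i * α k ≤ u k * α k := mul_le_mul_of_nonneg_right (hmono i k h) (hα k).le
        _ ≤ u k * Mx := mul_le_mul_of_nonneg_left (Finset.le_sup' _ (Finset.mem_univ k)) (hu k)
        _ = Mx * u k := mul_comm _ _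
end

section
/- One-step sandwich for expected resource fractions (proof of Theorem 4.3, forward direction): Let M ≥ 1, α_1, …, α_M > 0, and p_1, …, p_M ≥ 0 with Σ_i p_i = 1; set β_i = α_i / Σ_k α_k. Assume that for all i, j: α_i ≤ α_j implies p_i ≤ p_j, and α_i ≤ α_j implies p_i·α_j ≥ p_j·α_i. Then for every c ∈ [0,1] and every i: min_k β_k ≤ (1−c)·p_i + c·β_i ≤ max_k β_k. -/
/-- One-step sandwich for expected resource fractions (proof of Theorem 4.3,
forward direction): with `β i = α i / Σ α`, the conditional expectation
`(1 − c)·p i + c·β i` of the next resource fraction lies between `min β`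
and `max β`. -/
theorem stmt_2 (M : ℕ) (hM : 1 ≤ M) (α p : Fin M → ℝ)
    (hα : ∀ i, 0 < α i) (hp : ∀ i, 0 ≤ p i) (hpsum : ∑ i, p i = 1)
    (hmono : ∀ i j, α i ≤ α j → p i ≤ p j)
    (hrate : ∀ i j, α i ≤ α j → p j * α i ≤ p i * α j) :
    ∀ c : ℝ, 0 ≤ c → c ≤ 1 → ∀ i,
      Finset.univ.inf' ⟨⟨0, hM⟩, Finset.mem_univ _⟩ (fun k => α k / ∑ j, α j) ≤
        (1 - c) * p i + c * (α i / ∑ j, α j) ∧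
      (1 - c) * p i + c * (α i / ∑ j, α j) ≤
        Finset.univ.sup' ⟨⟨0, hM⟩, Finset.mem_univ _⟩ (fun k => α k / ∑ j, α j) := by
  intro c hc0 hc1 i
  have hS : 0 < ∑ j, α j :=
    Finset.sum_pos (fun j _ => hα j) ⟨⟨0, hM⟩, Finset.mem_univ _⟩
  set β : Fin M → ℝ := fun k => α k / ∑ j, α j with hβ
  obtain ⟨m, -, hm⟩ := Finset.exists_min_image Finset.univ α ⟨⟨0, hM⟩, Finset.mem_univ _⟩
  obtain ⟨M', -, hM'⟩ := Finset.exists_max_image Finset.univ α ⟨⟨0, hM⟩, Finset.mem_univ _⟩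
  have hm' : ∀ k, α m ≤ α k := fun k => hm k (Finset.mem_univ k)
  have hM'' : ∀ k, α k ≤ α M' := fun k => hM' k (Finset.mem_univ k)
  -- β m ≤ p m
  have hβm : β m ≤ p m := by
    have hsum : α m ≤ p m * ∑ j, α j := by
      calc α m = ∑ j, p j * α m := by rw [← Finset.sum_mul, hpsum, one_mul]
        _ ≤ ∑ j, p m * α j := Finset.sum_le_sum (fun j _ => hrate m j (hm' j))
        _ = p m * ∑ j, α j := by rw [Finset.mul_sum]
    exact (div_le_iff₀ hS).mpr (by linarith)
  have hpM : p M' ≤ β M' := by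
    have hsum : p M' * ∑ j, α j ≤ α M' := by
      calc p M' * ∑ j, α j = ∑ j, p M' * α j := by rw [Finset.mul_sum]
        _ ≤ ∑ j, p j * α M' := Finset.sum_le_sum (fun j _ => hrate j M' (hM'' j))
        _ = α M' := by rw [← Finset.sum_mul, hpsum, one_mul]
    exact (le_div_iff₀ hS).mpr hsum
  have hinf_le : ∀ k, Finset.univ.inf' ⟨⟨0, hM⟩, Finset.mem_univ _⟩ β ≤ β k :=
    fun k => Finset.inf'_le β (Finset.mem_univ k)
  have hle_sup : ∀ k, β k ≤ Finset.univ.sup' ⟨⟨0, hM⟩, Finset.mem_univ _⟩ β :=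
    fun k => Finset.le_sup' β (Finset.mem_univ k)
  have h1 : Finset.univ.inf' ⟨⟨0, hM⟩, Finset.mem_univ _⟩ β ≤ p i :=
    le_trans (hinf_le m) (le_trans hβm (hmono m i (hm' i)))
  have h2 : p i ≤ Finset.univ.sup' ⟨⟨0, hM⟩, Finset.mem_univ _⟩ β :=
    le_trans (hmono i M' (hM'' i)) (le_trans hpM (hle_sup M'))
  have h3 := hinf_le i
  have h4 := hle_sup i
  constructor <;> nlinarith [h1, h2, h3, h4]
end

section
/- Strict one-step contraction at the extremes (equality analysis in the proof of Theorem 4.3): Let M ≥ 2 and α_1, …, α_M > 0 be not all equal, and let p_1, …, p_M ≥ 0 with Σ_i p_i = 1; set β_i = α_i/Σ_k α_k. Assume that for all i, j: α_i ≤ α_j implies p_i ≤ p_j, and α_i < α_j implies p_i·α_j > p_j·α_i. Then for every c ∈ [0,1): if i₀ is an index with α_{i₀} maximal, then p_{i₀} < β_{i₀} and (1−c)·p_{i₀} + c·β_{i₀} < β_{i₀}; and if i₁ is an index with α_{i₁} minimal, then p_{i₁} > β_{i₁} and (1−c)·p_{i₁} + c·β_{i₁} > β_{i₁}. -/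
/-- Strict one-step contraction at the extremes (equality analysis in the
proof of Theorem 4.3): if the powers are not all equal, the block probability
is monotone in power and the reward rate per unit resource is strictly
decreasing in power, then the one-step expectation strictly decreases at a
maximal index and strictly increases at a minimal index, for every `c ∈ [0,1)`. -/
theorem stmt_5 (M : ℕ) (hM : 2 ≤ M) (α p : Fin M → ℝ)
    (hα : ∀ i, 0 < α i) (hne : ∃ i j, α i ≠ α j)
    (hp : ∀ i, 0 ≤ p i) (hpsum : ∑ i, p i = 1)
    (hmono : ∀ i j, α i ≤ α j → p i ≤ p j)
    (hrate : ∀ i j, α i < α j → p j * α i < p i * α j) :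
    ∀ c : ℝ, 0 ≤ c → c < 1 →
      (∀ i₀ : Fin M, (∀ k, α k ≤ α i₀) →
        p i₀ < α i₀ / ∑ k, α k ∧
        (1 - c) * p i₀ + c * (α i₀ / ∑ k, α k) < α i₀ / ∑ k, α k) ∧
      (∀ i₁ : Fin M, (∀ k, α i₁ ≤ α k) →
        α i₁ / ∑ k, α k < p i₁ ∧
        α i₁ / ∑ k, α k < (1 - c) * p i₁ + c * (α i₁ / ∑ k, α k)) := by
  intro c hc0 hc1
  have hS : 0 < ∑ k, α k :=
    Finset.sum_pos (fun k _ => hα k) ⟨⟨0, by omega⟩, Finset.mem_univ _⟩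
  constructor
  · intro i₀ hmax
    have hlt : ∃ k, α k < α i₀ := by
      obtain ⟨i, j, hij⟩ := hne
      rcases lt_or_ge (α i) (α i₀) with h | h
      · exact ⟨i, h⟩
      · have hi : α i = α i₀ := le_antisymm (hmax i) h
        refine ⟨j, lt_of_le_of_ne (hmax j) ?_⟩
        intro h'; exact hij (by rw [hi, h'])
    have key : p i₀ * ∑ k, α k < α i₀ := by
      obtain ⟨m, hm⟩ := hlt
      calc p i₀ * ∑ k, α k = ∑ k, p i₀ * α k := by rw [Finset.mul_sum]
        _ < ∑ k, p k * α i₀ := by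
            apply Finset.sum_lt_sum (fun k _ => ?_) ⟨m, Finset.mem_univ _, hrate m i₀ hm⟩
            rcases lt_or_eq_of_le (hmax k) with h | h
            · exact (hrate k i₀ h).le
            · rw [h]
              exact mul_le_mul_of_nonneg_right
                (hmono i₀ k h.ge) (hα i₀).le
        _ = α i₀ := by rw [← Finset.sum_mul, hpsum, one_mul]
    have h1 : p i₀ < α i₀ / ∑ k, α k := (lt_div_iff₀ hS).2 key
    refine ⟨h1, ?_⟩
    have : (1 - c) * p i₀ < (1 - c) * (α i₀ / ∑ k, α k) :=
      mul_lt_mul_of_pos_left h1 (by linarith)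
    linarith
  · intro i₁ hmin
    have hlt : ∃ k, α i₁ < α k := by
      obtain ⟨i, j, hij⟩ := hne
      rcases lt_or_ge (α i₁) (α i) with h | h
      · exact ⟨i, h⟩
      · have hi : α i = α i₁ := le_antisymm h (hmin i)
        refine ⟨j, lt_of_le_of_ne (hmin j) ?_⟩
        intro h'; exact hij (by rw [hi, ← h'])
    have key : α i₁ < p i₁ * ∑ k, α k := by
      obtain ⟨m, hm⟩ := hlt
      calc α i₁ = ∑ k, p k * α i₁ := by rw [← Finset.sum_mul, hpsum, one_mul]
        _ < ∑ k, p i₁ * α k := by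
            apply Finset.sum_lt_sum (fun k _ => ?_) ⟨m, Finset.mem_univ _, hrate i₁ m hm⟩
            rcases lt_or_eq_of_le (hmin k) with h | h
            · exact (hrate i₁ k h).le
            · rw [← h]
              exact mul_le_mul_of_nonneg_right (hmono k i₁ h.ge) (hα i₁).le
        _ = p i₁ * ∑ k, α k := by rw [Finset.mul_sum]
    have h1 : α i₁ / ∑ k, α k < p i₁ := (div_lt_iff₀ hS).2 key
    refine ⟨h1, ?_⟩
    have : (1 - c) * (α i₁ / ∑ k, α k) < (1 - c) * p i₁ :=
      mul_lt_mul_of_pos_left h1 (by linarith)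
    linarith
end

section
/- One-step ratio bound (Eq. (pf) in the proof of Theorem 5.3): Let (Ω, 𝓕, μ) be a probability space, let α_1, α_2, r, R_max > 0 with r·R_max ≤ α_1, and let R_1, R_2 : Ω → ℝ be integrable random variables with 0 ≤ R_1 ≤ R_max and 0 ≤ R_2 ≤ R_max almost everywhere and α_2·∫R_1 dμ = α_1·∫R_2 dμ. Then for every real x > 0 with x·α_2 < α_1: μ({ω : (α_1 + r·R_1(ω))/(α_2 + r·R_2(ω)) ≤ x}) ≤ x·α_2/α_1. -/
open MeasureTheory

/-! On the event `A = {(α₁ + r R₁)/(α₂ + r R₂) ≤ x}`, the random variable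
`g = x (α₂ + r R₂) - (x α₂ / α₁) r R₁` is at least `α₁`, and it is nonnegative everywhere because
`r R₁ ≤ r Rmax ≤ α₁`. By the mean condition `∫ g = x α₂`, so Markov's inequality gives
`α₁ μ(A) ≤ x α₂`. -/

lemma le_sub_div_mul_of_div_le {a₁ a₂ r R₁ R₂ x : ℝ} (ha₁ : 0 < a₁) (hden : 0 < a₂ + r * R₂)
    (hrR₁ : 0 ≤ r * R₁) (hx : x * a₂ ≤ a₁) (h : (a₁ + r * R₁) / (a₂ + r * R₂) ≤ x) :
    a₁ ≤ x * (a₂ + r * R₂) - x * a₂ / a₁ * (r * R₁) := by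
  have hcoef : x * a₂ / a₁ ≤ 1 := (div_le_one ha₁).2 hx
  have hA : a₁ + r * R₁ ≤ x * (a₂ + r * R₂) := (div_le_iff₀ hden).1 h
  nlinarith [mul_le_mul_of_nonneg_right hcoef hrR₁]

lemma sub_div_mul_nonneg {a₁ a₂ r R₁ R₂ x : ℝ} (ha₁ : 0 < a₁) (ha₂ : 0 ≤ a₂) (hx : 0 ≤ x)
    (hrR₂ : 0 ≤ r * R₂) (hrR₁ : r * R₁ ≤ a₁) :
    0 ≤ x * (a₂ + r * R₂) - x * a₂ / a₁ * (r * R₁) := by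
  have hcoef : 0 ≤ x * a₂ / a₁ := by positivity
  have : x * a₂ / a₁ * (r * R₁) ≤ x * a₂ := by
    calc x * a₂ / a₁ * (r * R₁) ≤ x * a₂ / a₁ * a₁ := mul_le_mul_of_nonneg_left hrR₁ hcoef
      _ = x * a₂ := div_mul_cancel₀ _ ha₁.ne'
  nlinarith [mul_nonneg hx hrR₂]

lemma measure_le_ofReal_integral_div {Ω : Type*} [MeasurableSpace Ω] {μ : Measure Ω}
    [IsFiniteMeasure μ] {f : Ω → ℝ} {s : Set Ω} {c : ℝ} (hc : 0 < c) (hf_nonneg : 0 ≤ᵐ[μ] f)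
    (hf : Integrable f μ) (hs : ∀ᵐ ω ∂μ, ω ∈ s → c ≤ f ω) :
    μ s ≤ ENNReal.ofReal ((∫ ω, f ω ∂μ) / c) := by
  calc μ s ≤ μ {ω | c ≤ f ω} := measure_mono_ae hs
    _ = ENNReal.ofReal (μ.real {ω | c ≤ f ω}) := (ofReal_measureReal (measure_ne_top _ _)).symm
    _ ≤ ENNReal.ofReal ((∫ ω, f ω ∂μ) / c) := by
      gcongr
      rw [le_div_iff₀ hc, mul_comm]
      exact mul_meas_ge_le_integral_of_nonneg hf_nonneg hf c

theorem stmt_7_general {Ω : Type*} [MeasurableSpace Ω] (μ : Measure Ω) [IsProbabilityMeasure μ]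
    (α₁ α₂ r Rmax : ℝ) (hα₁ : 0 < α₁) (hα₂ : 0 < α₂) (hr : 0 < r)
    (hrR : r * Rmax ≤ α₁)
    (R₁ R₂ : Ω → ℝ) (hInt₁ : Integrable R₁ μ) (hInt₂ : Integrable R₂ μ)
    (hbd₁ : ∀ᵐ ω ∂μ, 0 ≤ R₁ ω ∧ R₁ ω ≤ Rmax)
    (hbd₂ : ∀ᵐ ω ∂μ, 0 ≤ R₂ ω ∧ R₂ ω ≤ Rmax)
    (hmean : α₂ * ∫ ω, R₁ ω ∂μ = α₁ * ∫ ω, R₂ ω ∂μ) :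
    ∀ x : ℝ, 0 < x → x * α₂ < α₁ →
      μ {ω | (α₁ + r * R₁ ω) / (α₂ + r * R₂ ω) ≤ x} ≤ ENNReal.ofReal (x * α₂ / α₁) := by
  intro x hx hxα
  set g : Ω → ℝ := fun ω ↦ x * (α₂ + r * R₂ ω) - x * α₂ / α₁ * (r * R₁ ω)
  have hint₂ : Integrable (fun ω ↦ x * (α₂ + r * R₂ ω)) μ :=
    ((integrable_const α₂).add (hInt₂.const_mul r)).const_mul x
  have hint₁ : Integrable (fun ω ↦ x * α₂ / α₁ * (r * R₁ ω)) μ :=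
    (hInt₁.const_mul r).const_mul _
  have hg_integral : ∫ ω, g ω ∂μ = x * α₂ := by
    rw [integral_sub hint₂ hint₁, integral_const_mul, integral_const_mul,
      integral_add (integrable_const α₂) (hInt₂.const_mul r), integral_const_mul,
      integral_const_mul, integral_const, probReal_univ, one_smul]
    field_simp
    linear_combination (-r) * hmean
  have hg_nonneg : 0 ≤ᵐ[μ] g := by
    filter_upwards [hbd₁, hbd₂] with ω h₁ h₂
    exact sub_div_mul_nonneg hα₁ hα₂.le hx.le (mul_nonneg hr.le h₂.1)
      ((mul_le_mul_of_nonneg_left h₁.2 hr.le).trans hrR)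
  have hg_large : ∀ᵐ ω ∂μ, ω ∈ {ω | (α₁ + r * R₁ ω) / (α₂ + r * R₂ ω) ≤ x} → α₁ ≤ g ω := by
    filter_upwards [hbd₁, hbd₂] with ω h₁ h₂ hω
    exact le_sub_div_mul_of_div_le hα₁ (add_pos_of_pos_of_nonneg hα₂ (mul_nonneg hr.le h₂.1))
      (mul_nonneg hr.le h₁.1) hxα.le hω
  simpa only [hg_integral] using
    measure_le_ofReal_integral_div hα₁ hg_nonneg (hint₂.sub hint₁) hg_large

/-- One-step ratio bound (Eq. (pf) in the proof of Theorem 5.3): with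
rewards bounded by `Rmax` and equal mean reward rates per unit resource,
the probability that the power ratio drops to at most `x` is at most
`x·α₂/α₁`. -/
theorem stmt_7 {Ω : Type*} [MeasurableSpace Ω] (μ : Measure Ω) [IsProbabilityMeasure μ]
    (α₁ α₂ r Rmax : ℝ) (hα₁ : 0 < α₁) (hα₂ : 0 < α₂) (hr : 0 < r) (hRmax : 0 < Rmax)
    (hrR : r * Rmax ≤ α₁)
    (R₁ R₂ : Ω → ℝ) (hInt₁ : Integrable R₁ μ) (hInt₂ : Integrable R₂ μ)
    (hbd₁ : ∀ᵐ ω ∂μ, 0 ≤ R₁ ω ∧ R₁ ω ≤ Rmax)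
    (hbd₂ : ∀ᵐ ω ∂μ, 0 ≤ R₂ ω ∧ R₂ ω ≤ Rmax)
    (hmean : α₂ * ∫ ω, R₁ ω ∂μ = α₁ * ∫ ω, R₂ ω ∂μ) :
    ∀ x : ℝ, 0 < x → x * α₂ < α₁ →
      μ {ω | (α₁ + r * R₁ ω) / (α₂ + r * R₂ ω) ≤ x} ≤ ENNReal.ofReal (x * α₂ / α₁) :=
  stmt_7_general μ α₁ α₂ r Rmax hα₁ hα₂ hr hrR R₁ R₂ hInt₁ hInt₂ hbd₁ hbd₂ hmean
end

section
/- Bound on P₀ (proof of Theorem 5.3): Let r, R, α, β > 0 and ε ≥ 0 with r·R ≤ α, let n ∈ ℕ and d_1, …, d_n ≥ 0 satisfy β·∏_{t=1}^n (1 + r·d_t) = α/(1 + ε). Then ∏_{t=1}^n R/(R + d_t·α) ≤ (1 + ε)·β/α. -/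
/-- Bound on `P₀` (proof of Theorem 5.3): if the relative increments
`d_1, …, d_n ≥ 0` multiply `β` up to `α/(1+ε)`, then the product of the
one-step probability weights `R/(R + d_t·α)` is at most `(1+ε)·β/α`. -/
theorem stmt_8 (r R α β ε : ℝ) (hr : 0 < r) (hR : 0 < R) (hα : 0 < α) (hβ : 0 < β)
    (hε : 0 ≤ ε) (hrR : r * R ≤ α) (n : ℕ) (d : Fin n → ℝ) (hd : ∀ t, 0 ≤ d t)
    (hprod : β * ∏ t, (1 + r * d t) = α / (1 + ε)) :
    ∏ t, R / (R + d t * α) ≤ (1 + ε) * β / α := by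
  have hpos : ∀ t, (0:ℝ) < 1 + r * d t := fun t => by nlinarith [mul_nonneg hr.le (hd t)]
  have key : ∏ t, R / (R + d t * α) ≤ ∏ t, (1 + r * d t)⁻¹ := by
    apply Finset.prod_le_prod
    · intro t _
      have := mul_nonneg (hd t) hα.le
      positivity
    · intro t _
      rw [div_le_iff₀ (by nlinarith [mul_nonneg (hd t) hα.le]), inv_mul_eq_div, le_div_iff₀ (hpos t)]
      have : R * r * d t ≤ d t * α := by
        calc R * r * d t = (r * R) * d t := by ring
        _ ≤ α * d t := by exact mul_le_mul_of_nonneg_right hrR (hd t)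
        _ = d t * α := by ring
      nlinarith [hd t]
  have hprodpos : (0:ℝ) < ∏ t, (1 + r * d t) :=
    Finset.prod_pos fun t _ => hpos t
  have heq : ∏ t, (1 + r * d t) = α / ((1 + ε) * β) := by
    field_simp at hprod ⊢
    linarith [hprod]
  calc ∏ t, R / (R + d t * α) ≤ ∏ t, (1 + r * d t)⁻¹ := key
    _ = (∏ t, (1 + r * d t))⁻¹ := by rw [← Finset.prod_inv_distrib]
    _ = (1 + ε) * β / α := by rw [heq]; field_simp
end

section
/- Corner maximum of the hitting-probability product (proof of Theorem 5.3): Let r, R, α > 0 with r·R ≤ α, let n ∈ ℕ and d_1, …, d_n ≥ 0, and set K = ∏_{t=1}^n (1 + r·d_t). Then ∏_{t=1}^n R/(R + d_t·α) ≤ r·R/(r·R + α·(K − 1)); that is, subject to the constraint ∏_{t=1}^n (1 + r·d_t) = K, the product is maximized when one d_t equals (K − 1)/r and all the others are 0. -/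
/-!
Put `c = α / (r R) ≥ 1` and `y_t = r d_t`. Then `R / (R + d_t α) = 1 / (1 + c y_t)` and the
right-hand side is `1 / (1 + c (K - 1))` with `K = ∏ (1 + y_t)`, so the claim is
`1 + c (∏ (1 + y_t) - 1) ≤ ∏ (1 + c y_t)`: scaling all increments by `c ≥ 1` scales the total
excess `K - 1` by at least `c`. This follows by induction on the number of factors, the
inductive step gaining `c y (c - 1) (P - 1) ≥ 0` where `P ≥ 1` is the product of the others.
-/

open Finset

theorem one_add_mul_prod_sub_one_le_prod_one_add_mul {ι R : Type*} [CommRing R] [LinearOrder R]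
    [IsStrictOrderedRing R] (s : Finset ι) {c : R} (hc : 1 ≤ c) {y : ι → R}
    (hy : ∀ i ∈ s, 0 ≤ y i) :
    1 + c * (∏ i ∈ s, (1 + y i) - 1) ≤ ∏ i ∈ s, (1 + c * y i) := by
  classical
  induction s using Finset.induction_on with
  | empty => simp
  | insert a s ha ih =>
    rw [prod_insert ha, prod_insert ha]
    have hya : 0 ≤ y a := hy a (mem_insert_self a s)
    have hP : 1 ≤ ∏ i ∈ s, (1 + y i) :=
      one_le_prod fun i hi => le_add_of_nonneg_right (hy i (mem_insert_of_mem hi))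
    have hA := ih fun i hi => hy i (mem_insert_of_mem hi)
    have hgain : 0 ≤ c * y a * (c - 1) * (∏ i ∈ s, (1 + y i) - 1) := by
      have := zero_le_one.trans hc
      have := sub_nonneg.2 hc
      have := sub_nonneg.2 hP
      positivity
    have hca : 0 ≤ 1 + c * y a := by nlinarith
    nlinarith [mul_le_mul_of_nonneg_left hA hca]

theorem stmt_9_general (r R α : ℝ) (hr : 0 < r) (hR : 0 < R) (hrR : r * R ≤ α)
    (n : ℕ) (d : Fin n → ℝ) (hd : ∀ t, 0 ≤ d t) :
    ∏ t, R / (R + d t * α) ≤ r * R / (r * R + α * ((∏ t, (1 + r * d t)) - 1)) := by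
  have hrR0 : 0 < r * R := mul_pos hr hR
  set c := α / (r * R) with hc_def
  have hc : 1 ≤ c := (one_le_div hrR0).2 hrR
  have hy : ∀ t ∈ univ, 0 ≤ r * d t := fun t _ => mul_nonneg hr.le (hd t)
  have hK : 1 ≤ ∏ t, (1 + r * d t) :=
    one_le_prod fun t ht => le_add_of_nonneg_right (hy t ht)
  have hfactor : ∀ t, R / (R + d t * α) = (1 + c * (r * d t))⁻¹ := fun t => by
    rw [← inv_div, hc_def]; congr 1; field_simp
  have hcorner : r * R / (r * R + α * ((∏ t, (1 + r * d t)) - 1))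
      = (1 + c * ((∏ t, (1 + r * d t)) - 1))⁻¹ := by
    rw [← inv_div, hc_def]; congr 1; field_simp
  rw [hcorner, prod_congr rfl fun t _ => hfactor t, prod_inv_distrib]
  exact inv_anti₀ (by nlinarith [sub_nonneg.2 hK])
    (one_add_mul_prod_sub_one_le_prod_one_add_mul univ hc hy)

/-- Corner maximum of the hitting-probability product (proof of Theorem 5.3):
subject to `∏ (1 + r·d_t) = K`, the product `∏ R/(R + d_t·α)` is at most its
value at the corner where one `d_t` equals `(K − 1)/r` and the others vanish,
namely `r·R/(r·R + α·(K − 1))`. -/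
theorem stmt_9 (r R α : ℝ) (hr : 0 < r) (hR : 0 < R) (hα : 0 < α) (hrR : r * R ≤ α)
    (n : ℕ) (d : Fin n → ℝ) (hd : ∀ t, 0 ≤ d t) :
    ∏ t, R / (R + d t * α) ≤ r * R / (r * R + α * ((∏ t, (1 + r * d t)) - 1)) :=
  stmt_9_general r R α hr hR hrR n d hd
end

section
/- Equal-increment minimum of the hitting-probability product (proof of Theorem 5.3): Let r, R, α > 0 with r·R ≤ α, let n ≥ 1 and d_1, …, d_n ≥ 0, and set K = ∏_{t=1}^n (1 + r·d_t). Then ∏_{t=1}^n R/(R + d_t·α) ≥ ( R/(R + (α/r)·(K^{1/n} − 1)) )^n; that is, subject to the constraint ∏_{t=1}^n (1 + r·d_t) = K, the product is minimized when all the d_t are equal. -/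
/-!
Put `c = α / r`, `β = 1 - r R / α ∈ [0, 1)` and `x_t = 1 + r d_t`. Then `R + d_t α = c (x_t - β)`
and `R + c (K^{1/n} - 1) = c (K^{1/n} - β)`, so the claim says that `∏ (x_t - β)` is at most
`(K^{1/n} - β)^n` when `∏ x_t = K`. This is Mahler's inequality: the geometric mean is
superadditive, so `β + GM(x - β) ≤ GM(x)`. Mahler's inequality in turn is AM-GM applied to the
ratios `a_i / (a_i + b_i)` and `b_i / (a_i + b_i)`.
-/

open Finset

noncomputable def geomMean {ι : Type*} [Fintype ι] (x : ι → ℝ) : ℝ :=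
  (∏ i, x i) ^ ((Fintype.card ι : ℝ)⁻¹)

section GeomMean

variable {ι : Type*} [Fintype ι]

lemma geomMean_nonneg {x : ι → ℝ} (hx : ∀ i, 0 ≤ x i) : 0 ≤ geomMean x :=
  Real.rpow_nonneg (prod_nonneg fun i _ => hx i) _

lemma geomMean_pos {x : ι → ℝ} (hx : ∀ i, 0 < x i) : 0 < geomMean x :=
  Real.rpow_pos_of_pos (prod_pos fun i _ => hx i) _

variable [Nonempty ι]

lemma geomMean_pow_card {x : ι → ℝ} (hx : ∀ i, 0 ≤ x i) :
    geomMean x ^ Fintype.card ι = ∏ i, x i := by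
  rw [geomMean, ← Real.rpow_natCast, ← Real.rpow_mul (prod_nonneg fun i _ => hx i),
    inv_mul_cancel₀ (by positivity), Real.rpow_one]

lemma geomMean_const {β : ℝ} (hβ : 0 ≤ β) : geomMean (fun _ : ι => β) = β := by
  rw [geomMean, prod_const, card_univ, ← Real.rpow_natCast, ← Real.rpow_mul hβ,
    mul_inv_cancel₀ (by positivity), Real.rpow_one]

lemma geomMean_le_sum_div_card {x : ι → ℝ} (hx : ∀ i, 0 ≤ x i) :
    geomMean x ≤ (∑ i, x i) / Fintype.card ι := by
  simpa [geomMean] using Real.geom_mean_le_arith_mean univ (fun _ => 1) x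
    (fun _ _ => zero_le_one) (by simp [Fintype.card_pos]) fun i _ => hx i

/-- Mahler's inequality. -/
lemma geomMean_add_geomMean_le {a b : ι → ℝ} (ha : ∀ i, 0 ≤ a i) (hb : ∀ i, 0 ≤ b i) :
    geomMean a + geomMean b ≤ geomMean (a + b) := by
  by_cases hzero : ∃ i, a i + b i = 0
  · obtain ⟨i, hi⟩ := hzero
    have hai : a i = 0 := by linarith [ha i, hb i]
    have hbi : b i = 0 := by linarith [ha i, hb i]
    have hw : (Fintype.card ι : ℝ)⁻¹ ≠ 0 := by positivity
    rw [geomMean, geomMean, prod_eq_zero (mem_univ i) hai, prod_eq_zero (mem_univ i) hbi,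
      Real.zero_rpow hw, zero_add]
    exact geomMean_nonneg fun i => add_nonneg (ha i) (hb i)
  push Not at hzero
  have hs : ∀ i, 0 < a i + b i :=
    fun i => lt_of_le_of_ne (add_nonneg (ha i) (hb i)) (hzero i).symm
  have hratio : ∀ c : ι → ℝ, (∀ i, 0 ≤ c i) →
      geomMean c / geomMean (a + b) = geomMean (c / (a + b)) := by
    intro c hc
    simp only [geomMean, Pi.div_apply, Pi.add_apply, prod_div_distrib]
    exact (Real.div_rpow (prod_nonneg fun i _ => hc i) (prod_nonneg fun i _ => (hs i).le) _).symm
  rw [← div_le_one (geomMean_pos (x := a + b) hs), add_div, hratio a ha, hratio b hb]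
  calc geomMean (a / (a + b)) + geomMean (b / (a + b))
      ≤ (∑ i, a i / (a i + b i)) / Fintype.card ι
          + (∑ i, b i / (a i + b i)) / Fintype.card ι :=
        add_le_add (geomMean_le_sum_div_card fun i => div_nonneg (ha i) (hs i).le)
          (geomMean_le_sum_div_card fun i => div_nonneg (hb i) (hs i).le)
    _ = 1 := by
        rw [← add_div, ← sum_add_distrib, div_eq_one_iff_eq (by positivity)]
        simp [← add_div, div_self (hs _).ne']

lemma pow_div_geomMean_sub_le_prod {κ β : ℝ} (hκ : 0 ≤ κ) (hβ : 0 ≤ β) {x : ι → ℝ}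
    (hx : ∀ i, β < x i) :
    (κ / (geomMean x - β)) ^ Fintype.card ι ≤ ∏ i, κ / (x i - β) := by
  set y : ι → ℝ := fun i => x i - β
  have hy : ∀ i, 0 < y i := fun i => sub_pos.2 (hx i)
  have hsplit : (fun _ => β) + y = x := by ext i; simp [y]
  have hmahler := geomMean_add_geomMean_le (fun _ : ι => hβ) fun i => (hy i).le
  rw [hsplit, geomMean_const hβ] at hmahler
  calc (κ / (geomMean x - β)) ^ Fintype.card ι ≤ (κ / geomMean y) ^ Fintype.card ι := by
        gcongr
        · exact div_nonneg hκ (by linarith [geomMean_pos hy])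
        · exact geomMean_pos hy
        · linarith
    _ = ∏ i, κ / (x i - β) := by
        rw [div_pow, geomMean_pow_card fun i => (hy i).le, prod_div_distrib, prod_const,
          card_univ]

end GeomMean

theorem stmt_10_general (r R α : ℝ) (hr : 0 < r) (hR : 0 < R) (hrR : r * R ≤ α)
    (n : ℕ) (d : Fin n → ℝ) (hd : ∀ t, 0 ≤ d t) :
    (R / (R + (α / r) * ((∏ t, (1 + r * d t)) ^ ((n : ℝ)⁻¹) - 1))) ^ n ≤
      ∏ t, R / (R + d t * α) := by
  rcases n.eq_zero_or_pos with rfl | hn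
  · simp
  have : Nonempty (Fin n) := ⟨⟨0, hn⟩⟩
  have hα : 0 < α := (mul_pos hr hR).trans_le hrR
  have hκ : 0 < r * R / α := by positivity
  have hκ1 : r * R / α ≤ 1 := (div_le_one hα).2 hrR
  have key := pow_div_geomMean_sub_le_prod (β := 1 - r * R / α) (x := fun t => 1 + r * d t)
    hκ.le (by linarith) fun t => by nlinarith [mul_nonneg hr.le (hd t)]
  simp only [geomMean, Fintype.card_fin] at key
  convert key using 2 with t
  · field_simp
    ring
  · have hden : 1 + r * d t - (1 - r * R / α) = r * (R + d t * α) / α := by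
      field_simp
      ring
    rw [hden]
    field_simp

/-- Equal-increment minimum of the hitting-probability product (proof of
Theorem 5.3): subject to `∏ (1 + r·d_t) = K`, the product `∏ R/(R + d_t·α)`
is at least its value when all increments are equal, namely
`(R/(R + (α/r)·(K^{1/n} − 1)))^n`. -/
theorem stmt_10 (r R α : ℝ) (hr : 0 < r) (hR : 0 < R) (hα : 0 < α) (hrR : r * R ≤ α)
    (n : ℕ) (hn : 1 ≤ n) (d : Fin n → ℝ) (hd : ∀ t, 0 ≤ d t) :
    (R / (R + (α / r) * ((∏ t, (1 + r * d t)) ^ ((n : ℝ)⁻¹) - 1))) ^ n ≤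
      ∏ t, R / (R + d t * α) :=
  stmt_10_general r R α hr hR hrR n d hd
end

section
/- Equation (pf1) in the proof of Theorem 5.3: Let α, r, R > 0, k ∈ ℕ, and 0 < β < β′. Put A = α + k·r·R and B = α + (k+1)·r·R, and define d_k = (A/β − 1)/r, d_k′ = (A/β′ − 1)/r, d_{k+1} = (B/β − 1)/r, and d_{k+1}′ = (B/β′ − 1)/r. Then d_k·(R + B·d_{k+1}′) > d_k′·(R + B·d_{k+1}). -/
/-- Equation (pf1) in the proof of Theorem 5.3: with `A = α + k·r·R`,
`B = α + (k+1)·r·R`, and catch-up growths `d_k = (A/β − 1)/r`,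
`d_k′ = (A/β′ − 1)/r`, `d_{k+1} = (B/β − 1)/r`, `d_{k+1}′ = (B/β′ − 1)/r`
for `0 < β < β′`, one has `d_k·(R + B·d_{k+1}′) > d_k′·(R + B·d_{k+1})`. -/
theorem stmt_12 (α r R : ℝ) (hα : 0 < α) (hr : 0 < r) (hR : 0 < R)
    (k : ℕ) (β β' : ℝ) (hβ : 0 < β) (hββ' : β < β')
    (A B dk dk' dk1 dk1' : ℝ)
    (hA : A = α + k * r * R) (hB : B = α + (k + 1) * r * R)
    (hdk : dk = (A / β - 1) / r) (hdk' : dk' = (A / β' - 1) / r)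
    (hdk1 : dk1 = (B / β - 1) / r) (hdk1' : dk1' = (B / β' - 1) / r) :
    dk' * (R + B * dk1) < dk * (R + B * dk1') := by
  have hβ' : (0:ℝ) < β' := hβ.trans hββ'
  have hk : (0:ℝ) ≤ (k:ℝ) * r * R := by positivity
  have hA0 : 0 < A := by rw [hA]; linarith
  have hB0 : 0 < B := by rw [hB]; nlinarith
  have key : dk * (R + B * dk1') - dk' * (R + B * dk1)
      = R * (1/β - 1/β') * (A + B) / r := by
    rw [hdk, hdk', hdk1, hdk1', hA, hB]
    field_simp
    ring
  have hpos : 0 < R * (1/β - 1/β') * (A + B) / r := by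
    have : 1/β' < 1/β := one_div_lt_one_div_of_lt hβ hββ'
    have h1 : 0 < 1/β - 1/β' := by linarith
    positivity
  linarith [key ▸ hpos]
end

section
/- Comparison of the random walks W₁ and W₂ (H₁-comparison in the proof of Theorem 5.3): Let α, r, R > 0 with r·R ≤ α, and let d_0, d_1, d_{01}, d_{02}, d_1′ ≥ 0 satisfy (1 + r·d_{01})·(1 + r·d_{02}) = 1 + r·d_0 and (1 + r·d_{01})·(1 + r·d_1′) = 1 + r·d_1. Then (α·d_{01}/(R + α·d_{01}))·(R/(R + (α + r·R)·d_1)) + (R/(R + α·d_{01}))·(α·d_{02}/(R + α·d_{02}))·(R/(R + (α + r·R)·d_1′)) ≥ (α·d_0/(R + α·d_0))·(R/(R + (α + r·R)·d_1)). -/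
/-- Comparison of the random walks `W₁` and `W₂` (H₁-comparison in the proof
of Theorem 5.3): adding an intermediate break point `d₀₁` on the starting
level can only increase the catch-up probability. -/
theorem stmt_13 (α r R d0 d1 d01 d02 d1' : ℝ) (hα : 0 < α) (hr : 0 < r) (hR : 0 < R)
    (hrR : r * R ≤ α)
    (h0 : 0 ≤ d0) (h1 : 0 ≤ d1) (h01 : 0 ≤ d01) (h02 : 0 ≤ d02) (h1' : 0 ≤ d1')
    (hc0 : (1 + r * d01) * (1 + r * d02) = 1 + r * d0)
    (hc1 : (1 + r * d01) * (1 + r * d1') = 1 + r * d1) :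
    α * d0 / (R + α * d0) * (R / (R + (α + r * R) * d1)) ≤
      α * d01 / (R + α * d01) * (R / (R + (α + r * R) * d1)) +
        R / (R + α * d01) * (α * d02 / (R + α * d02)) *
          (R / (R + (α + r * R) * d1')) := by
  have hd0 : d0 = d01 + d02 + r * d01 * d02 :=
    mul_left_cancel₀ hr.ne' (by linear_combination -hc0)
  have hd1 : d1 = d01 + d1' + r * d01 * d1' :=
    mul_left_cancel₀ hr.ne' (by linear_combination -hc1)
  subst hd0 hd1
  have hA : 0 < R + α * d01 := by positivity
  have hB : 0 < R + α * d02 := by positivity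
  have hC : 0 < R + α * (d01 + d02 + r * d01 * d02) := by positivity
  have hD : 0 < R + (α + r * R) * (d01 + d1' + r * d01 * d1') := by positivity
  have hE : 0 < R + (α + r * R) * d1' := by positivity
  have s1 : (1 + r * d01) * (R + α * d02) ≤ R + α * (d01 + d02 + r * d01 * d02) := by
    nlinarith [mul_nonneg (sub_nonneg.2 hrR) h01]
  have s2 : R + (α + r * R) * d1' ≤ R + (α + r * R) * (d01 + d1' + r * d01 * d1') := by
    nlinarith [mul_nonneg (by positivity : (0:ℝ) ≤ α + r * R) (mul_nonneg (mul_nonneg hr.le h01) h1'),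
      mul_nonneg (by positivity : (0:ℝ) ≤ α + r * R) h01]
  have key : (1 + r * d01) * (R + α * d02) * (R + (α + r * R) * d1') ≤
      (R + α * (d01 + d02 + r * d01 * d02)) *
        (R + (α + r * R) * (d01 + d1' + r * d01 * d1')) :=
    mul_le_mul s1 s2 hE.le (le_trans (by positivity) s1)
  rw [← sub_nonneg]
  have id1 :
      α * d01 / (R + α * d01) * (R / (R + (α + r * R) * (d01 + d1' + r * d01 * d1'))) +
        R / (R + α * d01) * (α * d02 / (R + α * d02)) * (R / (R + (α + r * R) * d1')) -
        α * (d01 + d02 + r * d01 * d02) / (R + α * (d01 + d02 + r * d01 * d02)) *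
          (R / (R + (α + r * R) * (d01 + d1' + r * d01 * d1'))) =
      R ^ 2 * α * d02 *
        ((R + α * (d01 + d02 + r * d01 * d02)) *
            (R + (α + r * R) * (d01 + d1' + r * d01 * d1')) -
          (1 + r * d01) * (R + α * d02) * (R + (α + r * R) * d1')) /
        ((R + α * d01) * (R + α * d02) * (R + α * (d01 + d02 + r * d01 * d02)) *
          (R + (α + r * R) * (d01 + d1' + r * d01 * d1')) * (R + (α + r * R) * d1')) := by
    field_simp
    ring
  rw [id1]
  apply div_nonneg
  · have := sub_nonneg.2 key
    positivity
  · positivity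
end

section
/- Non-delegation for the square-root incentive system (Section 4.3): Let n ≥ 2, 2 ≤ m ≤ n, B > 0, and α_1, …, α_n > 0. Then Σ_{i=1}^m B·√(α_i) / (Σ_{j=1}^n √(α_j)) ≥ B·√(Σ_{i=1}^m α_i) / ( √(Σ_{i=1}^m α_i) + Σ_{j=m+1}^n √(α_j) ), with strict inequality when m < n. -/
/-!
The separate nodes earn `B · S / (S + T)` and the merged node `B · R / (R + T)`, where
`S = ∑ √αᵢ` and `R = √(∑ αᵢ)` over the `m` players and `T` is the rest of the network.
Since `x ↦ x / (x + T)` is increasing and `R < S` (strict subadditivity of `√`, as `m ≥ 2`),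
the claim follows; strictness for `m < n` comes from `T > 0`.
-/

open Finset

namespace Finset

variable {ι R : Type*} [Semiring R] [PartialOrder R] [IsStrictOrderedRing R] {f : ι → R}
  {s : Finset ι}

lemma sum_sq_lt_sq_sum_of_nonneg (hf : ∀ k ∈ s, 0 ≤ f k) {i j : ι} (hi : i ∈ s) (hj : j ∈ s)
    (hij : j ≠ i) (hfi : 0 < f i) (hfj : 0 < f j) :
    ∑ k ∈ s, f k ^ 2 < (∑ k ∈ s, f k) ^ 2 := by
  have hle_sum : ∀ k ∈ s, f k ≤ ∑ l ∈ s, f l := fun k hk => single_le_sum hf hk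
  have hlt_sum : f i < ∑ l ∈ s, f l :=
    single_lt_sum hij hi hj hfj fun k hk _ => hf k hk
  simp only [sq, sum_mul]
  refine sum_lt_sum (fun k hk => ?_) ⟨i, hi, ?_⟩
  · exact mul_le_mul_of_nonneg_left (hle_sum k hk) (hf k hk)
  · exact mul_lt_mul_of_pos_left hlt_sum hfi

end Finset

lemma Real.sqrt_sum_lt_sum_sqrt {ι : Type*} {s : Finset ι} {f : ι → ℝ}
    (hf : ∀ k ∈ s, 0 ≤ f k) {i j : ι} (hi : i ∈ s) (hj : j ∈ s) (hij : j ≠ i)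
    (hfi : 0 < f i) (hfj : 0 < f j) :
    √(∑ k ∈ s, f k) < ∑ k ∈ s, √(f k) := by
  have hsqrt_pos : 0 < ∑ k ∈ s, √(f k) :=
    (Real.sqrt_pos.2 hfi).trans_le (single_le_sum (fun k _ => Real.sqrt_nonneg _) hi)
  rw [Real.sqrt_lt' hsqrt_pos]
  calc ∑ k ∈ s, f k = ∑ k ∈ s, √(f k) ^ 2 :=
        sum_congr rfl fun k hk => (Real.sq_sqrt (hf k hk)).symm
    _ < (∑ k ∈ s, √(f k)) ^ 2 :=
        sum_sq_lt_sq_sum_of_nonneg (fun k _ => Real.sqrt_nonneg _) hi hj hij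
          (Real.sqrt_pos.2 hfi) (Real.sqrt_pos.2 hfj)

section ShareOfTotal

variable {K : Type*} [Field K] [LinearOrder K] [IsStrictOrderedRing K] {a b c : K}

lemma div_add_le_div_add_of_le (ha : 0 < a) (hab : a ≤ b) (hc : 0 ≤ c) :
    a / (a + c) ≤ b / (b + c) := by
  rw [div_le_div_iff₀ (by positivity) (by linarith)]
  nlinarith [mul_le_mul_of_nonneg_right hab hc]

lemma div_add_lt_div_add_of_lt (ha : 0 ≤ a) (hab : a < b) (hc : 0 < c) :
    a / (a + c) < b / (b + c) := by
  rw [div_lt_div_iff₀ (by positivity) (by linarith)]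
  nlinarith [mul_lt_mul_of_pos_right hab hc]

end ShareOfTotal

theorem stmt_15_general (n m : ℕ) (hm : 2 ≤ m) (hmn : m ≤ n)
    (B : ℝ) (hB : 0 < B) (α : ℕ → ℝ) (hα : ∀ i < n, 0 < α i) :
    (B * Real.sqrt (∑ i ∈ Finset.range m, α i) /
        (Real.sqrt (∑ i ∈ Finset.range m, α i) +
          ∑ j ∈ Finset.Ico m n, Real.sqrt (α j)) ≤
      ∑ i ∈ Finset.range m,
        B * Real.sqrt (α i) / ∑ j ∈ Finset.range n, Real.sqrt (α j)) ∧
    (m < n →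
      B * Real.sqrt (∑ i ∈ Finset.range m, α i) /
          (Real.sqrt (∑ i ∈ Finset.range m, α i) +
            ∑ j ∈ Finset.Ico m n, Real.sqrt (α j)) <
        ∑ i ∈ Finset.range m,
          B * Real.sqrt (α i) / ∑ j ∈ Finset.range n, Real.sqrt (α j)) := by
  have hαm : ∀ i ∈ range m, 0 < α i := fun i hi => hα i ((mem_range.1 hi).trans_le hmn)
  have hmem : ∀ i < m, i ∈ range m := fun i hi => mem_range.2 hi
  have hR : 0 < √(∑ i ∈ range m, α i) :=
    Real.sqrt_pos.2 (sum_pos hαm ⟨0, hmem 0 (by omega)⟩)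
  have hRS : √(∑ i ∈ range m, α i) < ∑ i ∈ range m, √(α i) :=
    Real.sqrt_sum_lt_sum_sqrt (fun i hi => (hαm i hi).le) (hmem 0 (by omega)) (hmem 1 hm)
      one_ne_zero (hαm 0 (hmem 0 (by omega))) (hαm 1 (hmem 1 hm))
  have hT : 0 ≤ ∑ j ∈ Ico m n, √(α j) := sum_nonneg fun _ _ => Real.sqrt_nonneg _
  rw [← sum_div, ← mul_sum, ← sum_range_add_sum_Ico _ hmn, mul_div_assoc, mul_div_assoc]
  refine ⟨mul_le_mul_of_nonneg_left (div_add_le_div_add_of_le hR hRS.le hT) hB.le,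
    fun hmn' => mul_lt_mul_of_pos_left (div_add_lt_div_add_of_lt hR.le hRS ?_) hB⟩
  exact sum_pos (fun j hj => Real.sqrt_pos.2 (hα j (mem_Ico.1 hj).2)) (nonempty_Ico.2 hmn')

/-- Non-delegation for the square-root incentive system (Section 4.3):
`m` players running separate nodes earn at least as much in total as when
they combine their resource power into a single node, with strict inequality
when `m < n`. -/
theorem stmt_15 (n m : ℕ) (hn : 2 ≤ n) (hm : 2 ≤ m) (hmn : m ≤ n)
    (B : ℝ) (hB : 0 < B) (α : ℕ → ℝ) (hα : ∀ i < n, 0 < α i) :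
    (B * Real.sqrt (∑ i ∈ Finset.range m, α i) /
        (Real.sqrt (∑ i ∈ Finset.range m, α i) +
          ∑ j ∈ Finset.Ico m n, Real.sqrt (α j)) ≤
      ∑ i ∈ Finset.range m,
        B * Real.sqrt (α i) / ∑ j ∈ Finset.range n, Real.sqrt (α j)) ∧
    (m < n →
      B * Real.sqrt (∑ i ∈ Finset.range m, α i) /
          (Real.sqrt (∑ i ∈ Finset.range m, α i) +
            ∑ j ∈ Finset.Ico m n, Real.sqrt (α j)) <
        ∑ i ∈ Finset.range m,
          B * Real.sqrt (α i) / ∑ j ∈ Finset.range n, Real.sqrt (α j)) :=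
  stmt_15_general n m hm hmn B hB α hα
end

section
/- Convexity of the hitting-probability product (proof of Theorem 5.3): For all reals R, α > 0 and every n ≥ 1, the function (d_1, …, d_n) ↦ ∏_{t=1}^n R/(R + d_t·α) is convex on the set {d ∈ ℝⁿ : d_t ≥ 0 for all t}. -/
/-! The factor `R / (R + d_t α)` is positive on the orthant and its logarithm
`log R - log (R + d_t α)` is convex there, being `-log` composed with an affine map. So the product
is the exponential of a sum of convex functions, and the exponential of a convex function is
convex because `exp` is convex and monotone. -/

open Real

section

variable {E ι : Type*} [AddCommGroup E] [Module ℝ E] {s : Set E}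

theorem ConvexOn.finset_sum {f : ι → E → ℝ} (hs : Convex ℝ s) (t : Finset ι)
    (hf : ∀ i ∈ t, ConvexOn ℝ s (f i)) : ConvexOn ℝ s (fun x => ∑ i ∈ t, f i x) := by
  classical
  induction t using Finset.induction_on with
  | empty => simpa using convexOn_const 0 hs
  | insert i t hi ih =>
    simp only [Finset.sum_insert hi]
    exact (hf i (t.mem_insert_self i)).add (ih fun j hj => hf j (Finset.mem_insert_of_mem hj))

theorem ConvexOn.rexp {f : E → ℝ} (hf : ConvexOn ℝ s f) : ConvexOn ℝ s (fun x => exp (f x)) := by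
  refine ⟨hf.1, fun x hx y hy a b ha hb hab => ?_⟩
  calc exp (f (a • x + b • y))
      ≤ exp (a • f x + b • f y) := exp_le_exp.2 (hf.2 hx hy ha hb hab)
    _ ≤ a • exp (f x) + b • exp (f y) :=
      convexOn_exp.2 (Set.mem_univ _) (Set.mem_univ _) ha hb hab

theorem convexOn_neg_log_comp_affineMap (A : E →ᵃ[ℝ] ℝ) :
    ConvexOn ℝ (A ⁻¹' Set.Ioi 0) (fun x => -log (A x)) :=
  strictConcaveOn_log_Ioi.concaveOn.neg.comp_affineMap A

theorem convexOn_prod_of_convexOn_log [Fintype ι] {f : ι → E → ℝ} (hs : Convex ℝ s)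
    (hpos : ∀ i, ∀ x ∈ s, 0 < f i x) (hlog : ∀ i, ConvexOn ℝ s (fun x => log (f i x))) :
    ConvexOn ℝ s (fun x => ∏ i, f i x) := by
  refine (ConvexOn.finset_sum hs Finset.univ fun i _ => hlog i).rexp.congr fun x hx => ?_
  simp only [exp_sum, exp_log (hpos _ x hx)]

end

theorem stmt_16_general (R α : ℝ) (hR : 0 < R) (hα : 0 < α) (n : ℕ) :
    ConvexOn ℝ {d : Fin n → ℝ | ∀ t, 0 ≤ d t}
      (fun d : Fin n → ℝ => ∏ t, R / (R + d t * α)) := by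
  have horthant : {d : Fin n → ℝ | ∀ t, 0 ≤ d t} = Set.Ici 0 := rfl
  have hpos : ∀ t, ∀ d ∈ Set.Ici (0 : Fin n → ℝ), 0 < R + d t * α := fun t d hd => by
    have : 0 ≤ d t := hd t
    positivity
  rw [horthant]
  refine convexOn_prod_of_convexOn_log (convex_Ici 0)
    (fun t d hd => div_pos hR (hpos t d hd)) fun t => ?_
  let A : (Fin n → ℝ) →ᵃ[ℝ] ℝ :=
    AffineMap.const ℝ _ R + (α • LinearMap.proj t : (Fin n → ℝ) →ₗ[ℝ] ℝ).toAffineMap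
  have hA : ∀ d, A d = R + d t * α := fun d => by simp [A, mul_comm]
  have hneglog := (convexOn_neg_log_comp_affineMap A).subset
    (fun d hd => show 0 < A d by rw [hA]; exact hpos t d hd) (convex_Ici 0)
  refine (hneglog.add_const (log R)).congr fun d hd => ?_
  rw [Pi.add_apply, hA, log_div hR.ne' (hpos t d hd).ne']
  ring

/-- Convexity of the hitting-probability product (proof of Theorem 5.3):
for `R, α > 0` and `n ≥ 1`, the function `d ↦ ∏ t, R/(R + d t·α)` is convex
on the nonnegative orthant. -/
theorem stmt_16 (R α : ℝ) (hR : 0 < R) (hα : 0 < α) (n : ℕ) (hn : 1 ≤ n) :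
    ConvexOn ℝ {d : Fin n → ℝ | ∀ t, 0 ≤ d t}
      (fun d : Fin n → ℝ => ∏ t, R / (R + d t * α)) :=
  stmt_16_general R α hR hα n
end
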